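/- The function B(μ) = π³ · 2^{8 − 3μ/2} · Γ(3 − μ/2) / Γ(3 − μ/4)² is strictly decreasing on (0, 4], and B(4) = 4π³; hence B(μ) ≥ 4π³ > 1 for all μ ∈ (0, 4]. -/

import Mathlib

/-- `B(μ) = π³ 2^{8−3μ/2} Γ(3−μ/2) / Γ(3−μ/4)²`. -/
noncomputable def Bconst (μ : ℝ) : ℝ :=
  Real.pi ^ 3 * (2 : ℝ) ^ (8 - 3 * μ / 2) * Real.Gamma (3 - μ / 2) / Real.Gamma (3 - μ / 4) ^ 2

open MeasureTheory Set Real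

noncomputable def Ibeta (u : ℝ) : ℝ :=
  ∫ x in Set.Ioc (0:ℝ) 1, x ^ (u - 1) * (1 - x) ^ (-(1/2) : ℝ)

lemma integrableOn_Ibeta {u : ℝ} (hu : 0 < u) :
    IntegrableOn (fun x : ℝ => x ^ (u - 1) * (1 - x) ^ (-(1/2) : ℝ)) (Set.Ioc 0 1) := by
  have hc : IntervalIntegrable (fun x : ℝ =>
      (x : ℂ) ^ ((u : ℂ) - 1) * (1 - (x : ℂ)) ^ ((1/2 : ℂ) - 1)) volume 0 1 := by
    apply Complex.betaIntegral_convergent <;> simp [hu]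
  have hn := hc.norm
  rw [intervalIntegrable_iff_integrableOn_Ioc_of_le (by norm_num : (0:ℝ) ≤ 1)] at hn
  refine hn.congr_fun_ae ?_
  have h1 : (Set.Ioo (0:ℝ) 1 : Set ℝ) ∈ ae (volume.restrict (Set.Ioc (0:ℝ) 1)) := by
    rw [mem_ae_iff]
    have : (Set.Ioo (0:ℝ) 1)ᶜ ∩ Set.Ioc 0 1 = {1} := by
      ext x; simp only [mem_inter_iff, mem_compl_iff, mem_Ioo, mem_Ioc, mem_singleton_iff]
      constructor
      · rintro ⟨h, hx0, hx1⟩; by_contra h1; push_neg at h; rcases lt_or_eq_of_le hx1 with h2 | h2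
        · exact absurd (h hx0) (not_le.mpr h2)
        · exact h1 h2
      · rintro rfl; norm_num
    rw [Measure.restrict_apply (measurableSet_Ioo.compl), this]
    simp
  filter_upwards [h1] with x hx
  obtain ⟨hx0, hx1⟩ := hx
  have h1x : (0:ℝ) < 1 - x := by linarith
  rw [norm_mul]
  rw [show ((u:ℂ) - 1) = ((u - 1 : ℝ) : ℂ) by push_cast; ring,
    show ((1/2 : ℂ) - 1) = ((-(1/2) : ℝ) : ℂ) by push_cast; ring,
    show (1 - (x:ℂ)) = ((1 - x : ℝ) : ℂ) by push_cast; ring]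
  rw [Complex.norm_cpow_eq_rpow_re_of_pos hx0, Complex.norm_cpow_eq_rpow_re_of_pos h1x]
  simp

lemma Gamma_beta {u : ℝ} (hu : 0 < u) :
    Real.Gamma u * Real.Gamma (1/2) = Real.Gamma (u + 1/2) * Ibeta u := by
  have key := Complex.Gamma_mul_Gamma_eq_betaIntegral
    (s := (u : ℂ)) (t := (1/2 : ℂ)) (by simpa using hu) (by norm_num)
  have hbeta : Complex.betaIntegral (u : ℂ) (1/2 : ℂ) = (Ibeta u : ℂ) := by
    rw [Complex.betaIntegral]
    have : ∀ x ∈ Set.Icc (0:ℝ) 1,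
        (x : ℂ) ^ ((u:ℂ) - 1) * (1 - (x:ℂ)) ^ ((1/2:ℂ) - 1)
          = ((x ^ (u - 1) * (1 - x) ^ (-(1/2) : ℝ) : ℝ) : ℂ) := by
      intro x hx
      rw [Complex.ofReal_mul, Complex.ofReal_cpow hx.1, Complex.ofReal_cpow (by linarith [hx.2])]
      push_cast
      norm_num
    rw [intervalIntegral.integral_congr (g := fun x : ℝ =>
        ((x ^ (u - 1) * (1 - x) ^ (-(1/2) : ℝ) : ℝ) : ℂ))
        (by rwa [Set.uIcc_of_le (by norm_num : (0:ℝ) ≤ 1)])]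
    rw [intervalIntegral.integral_ofReal, Ibeta,
      intervalIntegral.integral_of_le (by norm_num : (0:ℝ) ≤ 1)]
  rw [hbeta, show ((u:ℂ) + 1/2) = ((u + 1/2 : ℝ) : ℂ) by push_cast; ring,
    Complex.Gamma_ofReal, Complex.Gamma_ofReal,
    show ((1:ℂ)/2) = ((1/2 : ℝ) : ℂ) by push_cast; ring, Complex.Gamma_ofReal] at key
  exact_mod_cast key
lemma Ibeta_pos {u : ℝ} (hu : 0 < u) : 0 < Ibeta u := by
  have h1 := Gamma_beta hu
  have h2 : 0 < Real.Gamma u := Real.Gamma_pos_of_pos hu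
  have h3 : 0 < Real.Gamma (1/2) := Real.Gamma_pos_of_pos (by norm_num)
  have h4 : 0 < Real.Gamma (u + 1/2) := Real.Gamma_pos_of_pos (by linarith)
  nlinarith

lemma Ibeta_holder {s t a b : ℝ} (hs : 0 < s) (ht : 0 < t) (ha : 0 < a) (hb : 0 < b)
    (hab : a + b = 1) : Ibeta (a * s + b * t) ≤ Ibeta s ^ a * Ibeta t ^ b := by
  let f : ℝ → ℝ → ℝ → ℝ := fun c w x => x ^ (c * (w - 1)) * (1 - x) ^ (c * (-(1/2) : ℝ))
  have e : Real.HolderConjugate (1 / a) (1 / b) := Real.holderConjugate_one_div ha hb hab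
  have hst : 0 < a * s + b * t := by positivity
  have posf : ∀ c w x : ℝ, x ∈ Set.Ioc (0:ℝ) 1 → 0 ≤ f c w x := fun c w x hx =>
    mul_nonneg (Real.rpow_nonneg hx.1.le _) (Real.rpow_nonneg (by linarith [hx.2]) _)
  have posf' : ∀ c w : ℝ, 0 ≤ᵐ[volume.restrict (Set.Ioc (0:ℝ) 1)] f c w := fun c w =>
    (ae_restrict_iff' measurableSet_Ioc).mpr (ae_of_all _ (posf c w))
  have fpow : ∀ {c x : ℝ} (_ : 0 < c) (w : ℝ) (_ : x ∈ Set.Ioc (0:ℝ) 1),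
      x ^ (w - 1) * (1 - x) ^ (-(1/2) : ℝ) = f c w x ^ (1 / c) := by
    intro c x hc w hx
    dsimp only [f]
    rw [Real.mul_rpow (Real.rpow_nonneg hx.1.le _) (Real.rpow_nonneg (by linarith [hx.2]) _),
      ← Real.rpow_mul hx.1.le, ← Real.rpow_mul (by linarith [hx.2])]
    congr 2 <;> (field_simp; try ring)
  have f_meas : ∀ c w : ℝ, AEStronglyMeasurable (f c w) (volume.restrict (Set.Ioc (0:ℝ) 1)) := by
    intro c w
    apply Measurable.aestronglyMeasurable
    dsimp only [f]; fun_prop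
  have f_mem_Lp : ∀ {c w : ℝ} (hc : 0 < c) (hw : 0 < w),
      MemLp (f c w) (ENNReal.ofReal (1 / c)) (volume.restrict (Set.Ioc (0:ℝ) 1)) := by
    intro c w hc hw
    have A : ENNReal.ofReal (1 / c) ≠ 0 := by
      rwa [Ne, ENNReal.ofReal_eq_zero, not_le, one_div_pos]
    have B : ENNReal.ofReal (1 / c) ≠ ⊤ := ENNReal.ofReal_ne_top
    rw [← memLp_norm_rpow_iff _ A B, ENNReal.toReal_ofReal (one_div_nonneg.mpr hc.le),
      ENNReal.div_self A B, memLp_one_iff_integrable]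
    · apply Integrable.congr (integrableOn_Ibeta hw)
      refine Filter.eventuallyEq_of_mem (self_mem_ae_restrict measurableSet_Ioc) fun x hx => ?_
      rw [fpow hc w hx]
      congr 1
      exact (norm_of_nonneg (posf _ _ x hx)).symm
    · exact f_meas c w
  have key := MeasureTheory.integral_mul_le_Lp_mul_Lq_of_nonneg e (posf' a s) (posf' b t)
    (f_mem_Lp ha hs) (f_mem_Lp hb ht)
  rw [Ibeta, Ibeta, Ibeta]
  convert key using 1
  · refine setIntegral_congr_fun measurableSet_Ioc fun x hx => ?_
    dsimp only [f]
    have h1 : x ^ (a * s + b * t - 1) = x ^ (a * (s-1)) * x ^ (b * (t-1)) := by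
      rw [← Real.rpow_add hx.1]; congr 1; linarith
    have h2 : (1 - x) ^ (-(1/2) : ℝ)
        = (1 - x) ^ (a * (-(1/2) : ℝ)) * (1 - x) ^ (b * (-(1/2) : ℝ)) := by
      rw [← Real.rpow_add' (by linarith [hx.2]) (by intro h; nlinarith)]
      congr 1; nlinarith
    rw [h1, h2]; ring
  · rw [one_div_one_div, one_div_one_div]
    congr 2 <;> refine setIntegral_congr_fun measurableSet_Ioc fun x hx => ?_
    · exact fpow ha s hx
    · exact fpow hb t hx

lemma convexOn_log_Ibeta : ConvexOn ℝ (Set.Ioi 0) (fun u => Real.log (Ibeta u)) := by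
  refine convexOn_iff_forall_pos.mpr ⟨convex_Ioi _, fun x hx y hy a b ha hb hab => ?_⟩
  simp only [smul_eq_mul, Set.mem_Ioi] at hx hy ⊢
  rw [← Real.log_rpow (Ibeta_pos hx), ← Real.log_rpow (Ibeta_pos hy), ← Real.log_mul]
  · exact Real.log_le_log (Ibeta_pos (by positivity)) (Ibeta_holder hx hy ha hb hab)
  · exact (Real.rpow_pos_of_pos (Ibeta_pos hx) _).ne'
  · exact (Real.rpow_pos_of_pos (Ibeta_pos hy) _).ne'
lemma B_formula {μ : ℝ} (h0 : 0 < μ) (h6 : μ < 6) :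
    Bconst μ = Real.pi ^ 2 * (2:ℝ) ^ ((10:ℝ) - 2*μ) * Ibeta (3/2 - μ/4) / (2 - μ/4)^2 := by
  set a : ℝ := 3/2 - μ/4 with ha_def
  have ha : 0 < a := by rw [ha_def]; linarith
  have hc : 0 < a + 1/2 := by linarith
  have key1 := Real.Gamma_mul_Gamma_add_half a
  have key2 := Gamma_beta ha
  rw [Real.Gamma_one_half_eq] at key2
  have hsq : Real.sqrt π * Real.sqrt π = π := Real.mul_self_sqrt pi_pos.le
  have h2 : (2:ℝ) ^ (8 - 3*μ/2) = 2 ^ ((10:ℝ) - 2*μ) * 2 ^ (1 - 2*a) := by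
    rw [← Real.rpow_add two_pos]; congr 1; rw [ha_def]; ring
  have hY := Real.Gamma_pos_of_pos hc
  have hZ := Ibeta_pos ha
  have hQ : (0:ℝ) < 2 ^ ((1:ℝ) - 2*a) := Real.rpow_pos_of_pos two_pos _
  have hP : (0:ℝ) < 2 ^ ((10:ℝ) - 2*μ) := Real.rpow_pos_of_pos two_pos _
  have hs : (0:ℝ) < Real.sqrt π := Real.sqrt_pos.mpr pi_pos
  have hkey : Real.Gamma (2*a) * 2 ^ ((1:ℝ) - 2*a) * π
      = Real.Gamma (a + 1/2) ^ 2 * Ibeta a := by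
    linear_combination (-Real.sqrt π) * key1 + Real.Gamma (a+1/2) * key2
      + (-(Real.Gamma (2*a) * (2:ℝ)^((1:ℝ)-2*a))) * hsq
  rw [Bconst, show 3 - μ/2 = 2*a by rw [ha_def]; ring,
    show 3 - μ/4 = (a + 1/2) + 1 by rw [ha_def]; ring,
    Real.Gamma_add_one hc.ne', show (2:ℝ) - μ/4 = a + 1/2 by rw [ha_def]; ring, h2]
  have hπ := Real.pi_pos
  rw [div_eq_div_iff (by positivity) (by positivity)]
  linear_combination (π^2 * (2:ℝ)^((10:ℝ)-2*μ) * (a+1/2)^2) * hkey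

lemma Bconst_pos {μ : ℝ} (h6 : μ < 6) : 0 < Bconst μ := by
  rw [Bconst]
  have h1 : 0 < Real.Gamma (3 - μ/2) := Real.Gamma_pos_of_pos (by linarith)
  have h2 : 0 < Real.Gamma (3 - μ/4) := Real.Gamma_pos_of_pos (by linarith)
  positivity
lemma logB_eq {μ : ℝ} (h0 : 0 < μ) (h6 : μ < 6) :
    Real.log (Bconst μ) = 2 * Real.log π + ((10:ℝ) - 2*μ) * Real.log 2
      + Real.log (Ibeta (3/2 - μ/4)) - 2 * Real.log (2 - μ/4) := by
  rw [B_formula h0 h6]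
  have hI : 0 < Ibeta (3/2 - μ/4) := Ibeta_pos (by linarith)
  have hc : (0:ℝ) < 2 - μ/4 := by linarith
  have hP : (0:ℝ) < (2:ℝ) ^ ((10:ℝ) - 2*μ) := Real.rpow_pos_of_pos two_pos _
  rw [Real.log_div (by positivity) (by positivity), Real.log_mul (by positivity) hI.ne',
    Real.log_mul (by positivity) hP.ne', Real.log_pow, Real.log_pow,
    Real.log_rpow two_pos]
  push_cast
  ring
lemma logB_strictconvex {x y a b : ℝ} (hx0 : 0 < x) (hx6 : x < 6) (hy0 : 0 < y) (hy6 : y < 6)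
    (hxy : x ≠ y) (ha : 0 < a) (hb : 0 < b) (hab : a + b = 1) :
    Real.log (Bconst (a*x + b*y)) < a * Real.log (Bconst x) + b * Real.log (Bconst y) := by
  have hz0 : 0 < a*x + b*y := by positivity
  have hz6 : a*x + b*y < 6 := by nlinarith
  rw [logB_eq hz0 hz6, logB_eq hx0 hx6, logB_eq hy0 hy6]
  -- the Ibeta part
  have hIx : (3:ℝ)/2 - x/4 ∈ Set.Ioi (0:ℝ) := by simp; linarith
  have hIy : (3:ℝ)/2 - y/4 ∈ Set.Ioi (0:ℝ) := by simp; linarith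
  have hIconv := convexOn_log_Ibeta.2 hIx hIy ha.le hb.le hab
  simp only [smul_eq_mul] at hIconv
  have hpt : a * (3/2 - x/4) + b * (3/2 - y/4) = 3/2 - (a*x + b*y)/4 := by nlinarith
  rw [hpt] at hIconv
  -- the log part
  have hu : (2:ℝ) - x/4 ∈ Set.Ioi (0:ℝ) := by simp; linarith
  have hv : (2:ℝ) - y/4 ∈ Set.Ioi (0:ℝ) := by simp; linarith
  have huv : (2:ℝ) - x/4 ≠ 2 - y/4 := fun h => hxy (by linarith [h]; )
  have hlog := strictConcaveOn_log_Ioi.2 hu hv huv ha hb hab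
  simp only [smul_eq_mul] at hlog
  have hpt2 : a * (2 - x/4) + b * (2 - y/4) = 2 - (a*x + b*y)/4 := by nlinarith
  rw [hpt2] at hlog
  have hb' : b = 1 - a := by linarith
  subst hb'
  nlinarith [hIconv, hlog]
lemma Bconst_four : Bconst 4 = 4 * π ^ 3 := by
  have h2 : (2:ℝ) ^ ((2:ℝ)) = 4 := by
    rw [show ((2:ℝ)) = ((2:ℕ):ℝ) by norm_num, Real.rpow_natCast]; norm_num
  rw [Bconst, show (8 - 3*(4:ℝ)/2) = 2 by norm_num, show (3 - (4:ℝ)/2) = 1 by norm_num,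
    show (3 - (4:ℝ)/4) = 2 by norm_num, Real.Gamma_one, Real.Gamma_two, h2]
  ring
lemma Gamma_five_quarters_le : Real.Gamma (5/4) ≤ 1 := by
  have h := Real.convexOn_log_Gamma.2 (x := 1) (y := 2) (by simp) (by norm_num)
    (by norm_num : (0:ℝ) ≤ 3/4) (by norm_num : (0:ℝ) ≤ 1/4) (by norm_num)
  simp only [smul_eq_mul, Function.comp_apply, Real.Gamma_one, Real.Gamma_two,
    Real.log_one] at h
  norm_num at h
  calc Real.Gamma (5/4) = Real.exp (Real.log (Real.Gamma (5/4))) :=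
        (Real.exp_log (Real.Gamma_pos_of_pos (by norm_num))).symm
    _ ≤ Real.exp 0 := Real.exp_le_exp.mpr (by norm_num at h ⊢; linarith [h])
    _ = 1 := Real.exp_zero
set_option maxHeartbeats 1000000 in
lemma Bconst_five_le : Bconst 5 ≤ Bconst 4 := by
  rw [Bconst_four, Bconst]
  have e1 : (8 - 3*(5:ℝ)/2) = 1/2 := by norm_num
  have e2 : (3 - (5:ℝ)/2) = 1/2 := by norm_num
  have e3 : (3 - (5:ℝ)/4) = 3/4 + 1 := by norm_num
  rw [e1, e2, e3, Real.Gamma_add_one (by norm_num : (3/4:ℝ) ≠ 0), Real.Gamma_one_half_eq,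
    ← Real.sqrt_eq_rpow]
  set g34 := Real.Gamma (3/4) with hg34def
  have hg34 : 0 < g34 := Real.Gamma_pos_of_pos (by norm_num)
  have hrefl := Real.Gamma_mul_Gamma_one_sub (1/4)
  rw [show (1 - (1:ℝ)/4) = 3/4 by norm_num, show π * (1/4) = π/4 by ring,
    Real.sin_pi_div_four] at hrefl
  have hg14 : Real.Gamma (1/4) = 4 * Real.Gamma (5/4) := by
    have := Real.Gamma_add_one (show (1/4:ℝ) ≠ 0 by norm_num)
    rw [show (1/4 + 1 : ℝ) = 5/4 by norm_num] at this
    rw [this]; ring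
  have hg54 : 0 < Real.Gamma (5/4) := Real.Gamma_pos_of_pos (by norm_num)
  have hg14le : Real.Gamma (1/4) ≤ 4 := by rw [hg14]; linarith [Gamma_five_quarters_le]
  have hg14pos : 0 < Real.Gamma (1/4) := Real.Gamma_pos_of_pos (by norm_num)
  have s2 : Real.sqrt 2 ^ 2 = 2 := Real.sq_sqrt (by norm_num)
  have s2nn : 0 < Real.sqrt 2 := Real.sqrt_pos.mpr (by norm_num)
  have sp : Real.sqrt π ^ 2 = π := Real.sq_sqrt Real.pi_pos.le
  have spnn : 0 < Real.sqrt π := Real.sqrt_pos.mpr Real.pi_pos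
  have hπ := Real.pi_pos
  -- from reflection : Γ(1/4)*g34 = π / (√2/2) , so g34 * Γ(1/4) * √2 = 2π
  have hre : Real.Gamma (1/4) * g34 * Real.sqrt 2 = 2 * π := by
    rw [hrefl]  -- hrefl : Γ(1/4) * Γ(3/4) = π / (√2/2)
    field_simp
  -- hence g34 ≥ π √2 / 4
  have h4 : 2 * π ≤ 4 * (g34 * Real.sqrt 2) := by
    nlinarith [hre, mul_nonneg (mul_nonneg (sub_nonneg.mpr hg14le) hg34.le) s2nn.le]
  have h5 : 2 * π * Real.sqrt 2 ≤ 4 * (g34 * Real.sqrt 2) * Real.sqrt 2 :=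
    mul_le_mul_of_nonneg_right h4 s2nn.le
  have hg34lb : π * Real.sqrt 2 / 4 ≤ g34 := by nlinarith [h5, s2, s2nn, hπ]
  have hg34sq : π^2 / 8 ≤ g34^2 := by
    nlinarith [mul_le_mul hg34lb hg34lb (by positivity) hg34.le, s2, sq_nonneg π]
  -- numeric : √2 * √π ≤ 9 π² / 32
  have hs2le : Real.sqrt 2 ≤ 3/2 := by nlinarith [s2, s2nn]
  have hsple : Real.sqrt π ≤ 9/5 := by nlinarith [sp, spnn, Real.pi_lt_d2]
  have hnum : Real.sqrt 2 * Real.sqrt π ≤ 9 * π^2 / 32 := by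
    nlinarith [Real.pi_gt_d6, mul_le_mul hs2le hsple spnn.le (by norm_num : (0:ℝ) ≤ 3/2)]
  rw [div_le_iff₀ (by positivity)]
  nlinarith [hnum, hg34sq, pow_pos hπ 3, mul_le_mul_of_nonneg_left hg34sq (by positivity : (0:ℝ) ≤ 9 * π^3 / 4)]

theorem stmt_12 :
    StrictAntiOn Bconst (Set.Ioc 0 4) ∧ Bconst 4 = 4 * Real.pi ^ 3 ∧
    (∀ μ : ℝ, 0 < μ → μ ≤ 4 → 4 * Real.pi ^ 3 ≤ Bconst μ) ∧ 1 < 4 * Real.pi ^ 3 := by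
  have hlog54 : Real.log (Bconst 5) ≤ Real.log (Bconst 4) :=
    Real.log_le_log (Bconst_pos (by norm_num)) Bconst_five_le
  have stageA : ∀ μ : ℝ, 0 < μ → μ < 4 → Real.log (Bconst 4) < Real.log (Bconst μ) := by
    intro μ h0 h4
    have h5μ : (0:ℝ) < 5 - μ := by linarith
    set a : ℝ := 1/(5-μ) with had
    set b : ℝ := 1 - 1/(5-μ) with hbd
    have ha : 0 < a := by rw [had]; positivity
    have hb : 0 < b := by
      have : 1/(5-μ) < 1 := by rw [div_lt_one h5μ]; linarith
      rw [hbd]; linarith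
    have hab : a + b = 1 := by rw [had, hbd]; ring
    have hpt : a*μ + b*5 = 4 := by rw [had, hbd]; field_simp; ring
    have hs := logB_strictconvex h0 (by linarith) (by norm_num : (0:ℝ) < 5)
      (by norm_num : (5:ℝ) < 6) (by intro h; linarith) ha hb hab
    rw [hpt] at hs
    have hbB := mul_le_mul_of_nonneg_left hlog54 hb.le
    have e : a * Real.log (Bconst 4) = Real.log (Bconst 4) - b * Real.log (Bconst 4) := by
      have h' : a = 1 - b := by linarith
      rw [h']; ring
    have key : a * Real.log (Bconst 4) < a * Real.log (Bconst μ) := by rw [e]; linarith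
    exact lt_of_mul_lt_mul_left key ha.le
  have stageB : StrictAntiOn Bconst (Set.Ioc 0 4) := by
    intro x hx y hy hxy
    rw [Set.mem_Ioc] at hx hy
    obtain ⟨hx0, hx4⟩ := hx; obtain ⟨hy0, hy4⟩ := hy
    have h5x : (0:ℝ) < 5 - x := by linarith
    have h5y : (0:ℝ) < 5 - y := by linarith
    set a : ℝ := (5-y)/(5-x) with had
    set b : ℝ := 1 - (5-y)/(5-x) with hbd
    have ha : 0 < a := by rw [had]; positivity
    have hb : 0 < b := by
      have : (5-y)/(5-x) < 1 := by rw [div_lt_one h5x]; linarith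
      rw [hbd]; linarith
    have hab : a + b = 1 := by rw [had, hbd]; ring
    have hpt : a*x + b*5 = y := by rw [had, hbd]; field_simp; ring
    have hs := logB_strictconvex hx0 (by linarith) (by norm_num : (0:ℝ) < 5)
      (by norm_num : (5:ℝ) < 6) (by intro h; linarith) ha hb hab
    rw [hpt] at hs
    have h5y' : Real.log (Bconst 5) ≤ Real.log (Bconst y) := by
      rcases lt_or_eq_of_le hy4 with h | h
      · linarith [stageA y hy0 h]
      · rw [h]; exact hlog54
    have hbB := mul_le_mul_of_nonneg_left h5y' hb.le
    have e : a * Real.log (Bconst y) = Real.log (Bconst y) - b * Real.log (Bconst y) := by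
      have h' : a = 1 - b := by linarith
      rw [h']; ring
    have key : a * Real.log (Bconst y) < a * Real.log (Bconst x) := by rw [e]; linarith
    have hlt := lt_of_mul_lt_mul_left key ha.le
    have h2 := Real.exp_lt_exp.mpr hlt
    rwa [Real.exp_log (Bconst_pos (by linarith)), Real.exp_log (Bconst_pos (by linarith))] at h2
  refine ⟨stageB, Bconst_four, ?_, ?_⟩
  · intro μ h0 h4
    rcases lt_or_eq_of_le h4 with h | h
    · have := stageB (Set.mem_Ioc.mpr ⟨h0, h4⟩) (Set.mem_Ioc.mpr ⟨by norm_num, le_refl 4⟩) h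
      rw [Bconst_four] at this; exact this.le
    · rw [h, Bconst_four]
  · nlinarith [Real.pi_gt_three, sq_nonneg (π - 3), sq_nonneg π, Real.pi_pos]
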